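/- arXiv:0909.5352 — 3 statements merged into one kernel-verified Lean document; each statement's English description precedes it below -/
import Mathlib

section
/- The orbit of an element x under O(u(2)^m ⊕ ⟨1/4⟩) containing a generator g of the ⟨1/4⟩ summand has q-value 1/4 and size 2^{2m} + 2^m, while the orbit of e+f+g has q-value −3/4 (i.e., 5/4 in Q/2Z) and size 2^{2m} − 2^m. -/
/-- Underlying group of the finite quadratic form `u(2)^m ⊕ ⟨1/4⟩`. -/
abbrev FQF (m : ℕ) : Type := (Fin m → ZMod 2 × ZMod 2) × ZMod 4

/-- The quadratic form `u(2)^m ⊕ ⟨1/4⟩` with values in `ℚ/2ℤ`: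
each `u(2)` summand has `q(e)=q(f)=0`, `b(e,f)=1/2`, and the `⟨1/4⟩` summand
has `q(g)=1/4`. -/
def qFQF {m : ℕ} (x : FQF m) : AddCircle (2 : ℚ) :=
  (((∑ i, ((x.1 i).1.val : ℚ) * ((x.1 i).2.val : ℚ)) + ((x.2.val : ℚ))^2 / 4 : ℚ) :
    AddCircle (2 : ℚ))

/-- `y` is in the `O(q)`-orbit of `x`. -/
def inOrbit {m : ℕ} (x y : FQF m) : Prop :=
  ∃ σ : FQF m ≃+ FQF m, (∀ z, qFQF (σ z) = qFQF z) ∧ σ x = y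

/-- Standard generators `e`, `f` of one `u(2)` summand and `g` of `⟨1/4⟩`. -/
def eElt (m : ℕ) : FQF m := (fun i => if i.val = 0 then (1, 0) else 0, 0)
def fElt (m : ℕ) : FQF m := (fun i => if i.val = 0 then (0, 1) else 0, 0)
def gElt (m : ℕ) : FQF m := (0, 1)

/-!
Write `q (v, c) = Q v + c²/4` with `Q` the `ℤ/2`-valued form of `u(2)^m`. For odd `c` this is
`1/4 + Q v` in `ℚ/2ℤ`, so an isometry maps an element with odd `c` to one with odd `c` and the
same `Q`-value. Conversely, the reflections in the vectors `u = (w, 2t)` of norm `q u = 1` act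
transitively on each such level set: they move the `u(2)^m`-coordinate to any vector of the same
`Q`-value, and `u = (0, 2)` negates odd `c`. So the two orbits are `{Q = 0} × {1, 3}` and
`{Q = 1} × {1, 3}`, and the sizes come from `∑ᵥ (-1)^Q(v) = 2^m`.
-/

namespace QuarterSum

open QuadraticMap

def parity : ZMod 4 →+* ZMod 2 := ZMod.castHom (by norm_num) (ZMod 2)

lemma parity_add_two_mul_val (c : ZMod 4) (s : ZMod 2) :
    parity (c + 2 * (s.val : ZMod 4)) = parity c := by
  revert c s
  decide

section Orbits

variable {V : Type*} [AddCommGroup V] [Module (ZMod 2) V] (Q : QuadraticForm (ZMod 2) V)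

/-- `4q` for the form `q (v, c) = Q v + c²/4 ∈ ℚ/2ℤ` on `V ⊕ ⟨1/4⟩`; it takes values in
`ℤ/8`. -/
def fourQ (z : V × ZMod 4) : ZMod 8 := 4 * (Q z.1).val + z.2.val ^ 2

def reflCoeff (w : V) (t : ZMod 2) (z : V × ZMod 4) : ZMod 2 :=
  t * parity z.2 + polar Q z.1 w

/-- The reflection `z ↦ z + 2 b(z, u) u` in `u = (w, 2t)`, where `2 b(z, u) ∈ ℤ/2` is
`reflCoeff Q w t z`; it is an isometry when `q u = Q w + t` is `1`. -/
def reflect (w : V) (t : ZMod 2) (z : V × ZMod 4) : V × ZMod 4 :=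
  (z.1 + reflCoeff Q w t z • w, z.2 + 2 * ((reflCoeff Q w t z * t).val : ZMod 4))

lemma polar_self_eq_zero (v : V) : polar Q v v = 0 := by
  rw [polar_self, two_nsmul, ZModModule.add_self]

lemma reflCoeff_add (w : V) (t : ZMod 2) (z z' : V × ZMod 4) :
    reflCoeff Q w t (z + z') = reflCoeff Q w t z + reflCoeff Q w t z' := by
  simp only [reflCoeff, Prod.fst_add, Prod.snd_add, polar_add_left, map_add]
  ring

lemma reflCoeff_reflect (w : V) (t : ZMod 2) (z : V × ZMod 4) :
    reflCoeff Q w t (reflect Q w t z) = reflCoeff Q w t z := by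
  simp only [reflCoeff, reflect, parity_add_two_mul_val, polar_add_left, polar_smul_left,
    polar_self_eq_zero, smul_zero, add_zero]

lemma reflect_add (w : V) (t : ZMod 2) (z z' : V × ZMod 4) :
    reflect Q w t (z + z') = reflect Q w t z + reflect Q w t z' := by
  have hdbl : ∀ a b : ZMod 2, (2 * ((a + b).val : ZMod 4)) = 2 * a.val + 2 * b.val := by decide
  simp only [reflect, reflCoeff_add, add_mul, hdbl, add_smul, Prod.fst_add, Prod.snd_add,
    Prod.mk_add_mk]
  congr 1 <;> abel

lemma reflect_reflect (w : V) (t : ZMod 2) (z : V × ZMod 4) :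
    reflect Q w t (reflect Q w t z) = z := by
  have hdbl : ∀ s : ZMod 2, (2 * (s.val : ZMod 4)) + 2 * s.val = 0 := by decide
  rw [reflect, reflCoeff_reflect]
  simp only [reflect, add_assoc, ZModModule.add_self, add_zero, hdbl]

def reflectEquiv (w : V) (t : ZMod 2) : V × ZMod 4 ≃+ V × ZMod 4 :=
  AddEquiv.mk' (Function.Involutive.toPerm _ (reflect_reflect Q w t)) (reflect_add Q w t)

lemma fourQ_reflect (w : V) (t : ZMod 2) (hw : Q w + t = 1) (z : V × ZMod 4) :
    fourQ Q (reflect Q w t z) = fourQ Q z := by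
  have key : ∀ (a b t : ZMod 2) (c : ZMod 4),
      4 * ((a + (t * parity c + b) * (t * parity c + b) * (t + 1) + (t * parity c + b) * b :
          ZMod 2).val : ZMod 8) +
        ((c + 2 * (((t * parity c + b) * t : ZMod 2).val : ZMod 4) : ZMod 4).val : ZMod 8) ^ 2 =
      4 * (a.val : ZMod 8) + (c.val : ZMod 8) ^ 2 := by
    decide
  have hw' : Q w = t + 1 := by rw [← hw, add_left_comm, ZModModule.add_self, add_zero]
  unfold fourQ reflect
  rw [QuadraticMap.map_add (⇑Q), QuadraticMap.map_smul, polar_smul_right, hw']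
  exact key _ _ _ _

def OrbitRel (x y : V × ZMod 4) : Prop :=
  ∃ σ : V × ZMod 4 ≃+ V × ZMod 4, (∀ z, fourQ Q (σ z) = fourQ Q z) ∧ σ x = y

variable {Q}

lemma OrbitRel.trans {x y z : V × ZMod 4} (hxy : OrbitRel Q x y) (hyz : OrbitRel Q y z) :
    OrbitRel Q x z := by
  obtain ⟨σ, hσ, rfl⟩ := hxy
  obtain ⟨τ, hτ, rfl⟩ := hyz
  exact ⟨σ.trans τ, fun z => (hτ _).trans (hσ z), rfl⟩

lemma OrbitRel.fourQ_eq {x y : V × ZMod 4} (h : OrbitRel Q x y) : fourQ Q y = fourQ Q x := by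
  obtain ⟨σ, hσ, rfl⟩ := h
  exact hσ x

lemma orbitRel_reflect {w : V} {t : ZMod 2} (hw : Q w + t = 1) (z : V × ZMod 4) :
    OrbitRel Q z (reflect Q w t z) :=
  ⟨reflectEquiv Q w t, fourQ_reflect Q w t hw, rfl⟩

lemma orbitRel_of_parity_eq_one (v : V) {c d : ZMod 4} (hc : parity c = 1) (hd : parity d = 1) :
    OrbitRel Q (v, c) (v, d) := by
  by_cases hcd : c = d
  · exact ⟨AddEquiv.refl _, fun _ => rfl, by rw [hcd]; rfl⟩
  · have hflip : ∀ c d : ZMod 4, parity c = 1 → parity d = 1 → c ≠ d → c + 2 = d := by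
      decide
    have hQ0 : Q 0 + 1 = 1 := by rw [map_zero, zero_add]
    convert orbitRel_reflect hQ0 (v, c) using 1
    simp only [reflect, reflCoeff, hc, polar_zero_right, smul_zero, add_zero, one_mul]
    rw [← hflip c d hc hd hcd]
    rfl

lemma fourQ_eq_fourQ_iff {x : V × ZMod 4} (hx : parity x.2 = 1) (y : V × ZMod 4) :
    fourQ Q y = fourQ Q x ↔ Q y.1 = Q x.1 ∧ parity y.2 = 1 := by
  have key : ∀ (a a' : ZMod 2) (c c' : ZMod 4), parity c = 1 →
      (4 * (a'.val : ZMod 8) + (c'.val : ZMod 8) ^ 2 = 4 * a.val + c.val ^ 2 ↔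
        a' = a ∧ parity c' = 1) := by
    decide
  exact key _ _ _ _ hx

theorem orbitRel_iff {x : V × ZMod 4} (hx : parity x.2 = 1) (y : V × ZMod 4) :
    OrbitRel Q x y ↔ Q y.1 = Q x.1 ∧ parity y.2 = 1 := by
  refine ⟨fun h => (fourQ_eq_fourQ_iff hx y).1 h.fourQ_eq, fun ⟨hQ, hy⟩ => ?_⟩
  set w := x.1 + y.1
  have hQw : Q w = polar Q x.1 y.1 := by
    rw [QuadraticMap.map_add (⇑Q), hQ, ZModModule.add_self, zero_add]
  have hw : Q w + (Q w + 1) = 1 := by rw [← add_assoc, ZModModule.add_self, zero_add]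
  have hcoeff : reflCoeff Q w (Q w + 1) x = 1 := by
    rw [reflCoeff, hx, mul_one, polar_add_right, polar_self_eq_zero, zero_add, hQw,
      add_right_comm, ZModModule.add_self, zero_add]
  have hfst : x.1 + w = y.1 := by rw [← add_assoc, ZModModule.add_self, zero_add]
  refine (orbitRel_reflect hw x).trans ?_
  rw [reflect, hcoeff, one_smul, hfst]
  exact orbitRel_of_parity_eq_one y.1 (by rw [parity_add_two_mul_val, hx]) hy

theorem card_orbitRel {x : V × ZMod 4} (hx : parity x.2 = 1) :
    Nat.card {y // OrbitRel Q x y} = Nat.card {v // Q v = Q x.1} * 2 := by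
  rw [Nat.card_congr ((Equiv.subtypeEquivRight (orbitRel_iff hx)).trans
    (Equiv.subtypeProdEquivProd (p := fun v => Q v = Q x.1) (q := fun c => parity c = 1))),
    Nat.card_prod, Nat.card_eq_fintype_card (α := {c // parity c = 1})]
  rfl

end Orbits

def signChar : AddChar (ZMod 2) ℤ := AddChar.zmodChar 2 (by norm_num : (-1 : ℤ) ^ 2 = 1)

lemma two_mul_card_fiber {X : Type*} [Fintype X] (f : X → ZMod 2) (ε : ZMod 2) :
    2 * (Nat.card {x // f x = ε} : ℤ) = Nat.card X + signChar ε * ∑ x, signChar (f x) := by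
  classical
  have key : ∀ a b : ZMod 2, (1 + signChar a * signChar b : ℤ) = if b = a then 2 else 0 := by
    decide
  calc 2 * (Nat.card {x // f x = ε} : ℤ) = ∑ x, if f x = ε then 2 else 0 := by
        rw [Finset.sum_ite, Finset.sum_const_zero, add_zero, Finset.sum_const, nsmul_eq_mul,
          Nat.card_eq_fintype_card, Fintype.card_subtype, mul_comm]
    _ = ∑ x, (1 + signChar ε * signChar (f x)) := by simp only [key]
    _ = _ := by
        rw [Finset.sum_add_distrib, Finset.mul_sum, Nat.card_eq_fintype_card]
        simp

lemma _root_.AddChar.map_sum_eq_prod {A M ι : Type*} [AddCommMonoid A] [CommMonoid M]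
    (ψ : AddChar A M) (s : Finset ι) (f : ι → A) :
    ψ (∑ i ∈ s, f i) = ∏ i ∈ s, ψ (f i) :=
  map_prod ψ.toMonoidHom (fun i => Multiplicative.ofAdd (f i)) s

lemma sum_addChar_pi {R S ι : Type*} [CommSemiring R] [CommSemiring S] [Fintype ι]
    [DecidableEq ι] {M : ι → Type*} [∀ i, AddCommMonoid (M i)] [∀ i, Module R (M i)]
    [∀ i, Fintype (M i)]
    (Q : ∀ i, QuadraticMap R (M i) R) (ψ : AddChar R S) :
    ∑ x, ψ (pi Q x) = ∏ i, ∑ y, ψ (Q i y) := by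
  rw [Fintype.prod_sum]
  simp only [pi_apply, AddChar.map_sum_eq_prod]

def hyperbolicPlane (R : Type*) [CommSemiring R] : QuadraticForm R (R × R) :=
  linMulLin (LinearMap.fst R R R) (LinearMap.snd R R R)

def hyperbolic (R ι : Type*) [CommSemiring R] [Fintype ι] : QuadraticForm R (ι → R × R) :=
  pi fun _ => hyperbolicPlane R

lemma hyperbolic_apply {R ι : Type*} [CommSemiring R] [Fintype ι] (v : ι → R × R) :
    hyperbolic R ι v = ∑ i, (v i).1 * (v i).2 := by
  simp [hyperbolic, hyperbolicPlane, pi_apply, linMulLin_apply]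

lemma sum_signChar_hyperbolic (ι : Type*) [Fintype ι] [DecidableEq ι] :
    ∑ v, signChar (hyperbolic (ZMod 2) ι v) = 2 ^ Fintype.card ι := by
  have hplane : ∑ p : ZMod 2 × ZMod 2, signChar (hyperbolicPlane (ZMod 2) p) = 2 := by
    decide
  rw [hyperbolic, sum_addChar_pi, Finset.prod_congr rfl fun _ _ => hplane, Finset.prod_const,
    Finset.card_univ]

lemma two_mul_card_hyperbolic_eq (ι : Type*) [Fintype ι] [DecidableEq ι] (ε : ZMod 2) :
    2 * (Nat.card {v // hyperbolic (ZMod 2) ι v = ε} : ℤ) =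
      4 ^ Fintype.card ι + signChar ε * 2 ^ Fintype.card ι := by
  rw [two_mul_card_fiber, sum_signChar_hyperbolic, Nat.card_eq_fintype_card, Fintype.card_pi]
  simp

end QuarterSum

open QuarterSum

lemma coe_div_four_eq_coe_div_four_iff (a b : ℕ) :
    ((a / 4 : ℚ) : AddCircle (2 : ℚ)) = ((b / 4 : ℚ) : AddCircle (2 : ℚ)) ↔
      (a : ZMod 8) = b := by
  rw [← sub_eq_zero, ← AddCircle.coe_sub, AddCircle.coe_eq_zero_iff,
    ZMod.natCast_eq_natCast_iff, Nat.modEq_iff_dvd]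
  constructor
  · rintro ⟨n, hn⟩
    refine ⟨-n, ?_⟩
    rw [zsmul_eq_mul] at hn
    have : (b - a : ℚ) = 8 * -n := by linarith
    exact_mod_cast this
  · rintro ⟨k, hk⟩
    refine ⟨-k, ?_⟩
    have : (b - a : ℚ) = 8 * k := by exact_mod_cast hk
    rw [zsmul_eq_mul]
    push_cast
    linarith

lemma four_mul_natCast_eq (k : ℕ) : (4 * k : ZMod 8) = 4 * ((k : ZMod 2).val : ZMod 8) := by
  rw [ZMod.val_natCast]
  exact_mod_cast (ZMod.natCast_eq_natCast_iff' _ _ _).2 (by omega)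

section Concrete

variable {m : ℕ}

lemma qFQF_eq (z : FQF m) : qFQF z =
    (((4 * ∑ i, (z.1 i).1.val * (z.1 i).2.val + z.2.val ^ 2 : ℕ) / 4 : ℚ) :
      AddCircle (2 : ℚ)) := by
  rw [qFQF]
  push_cast
  ring_nf

lemma natCast_eq_fourQ (z : FQF m) :
    ((4 * ∑ i, (z.1 i).1.val * (z.1 i).2.val + z.2.val ^ 2 : ℕ) : ZMod 8) =
      fourQ (hyperbolic (ZMod 2) (Fin m)) z := by
  have hQ : ((∑ i, (z.1 i).1.val * (z.1 i).2.val : ℕ) : ZMod 2) =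
      hyperbolic (ZMod 2) (Fin m) z.1 := by
    simp [hyperbolic_apply]
  rw [fourQ, ← hQ, ← four_mul_natCast_eq]
  push_cast
  rfl

lemma qFQF_eq_coe_iff (z : FQF m) (n : ℕ) :
    qFQF z = ((n / 4 : ℚ) : AddCircle (2 : ℚ)) ↔
      fourQ (hyperbolic (ZMod 2) (Fin m)) z = n := by
  rw [qFQF_eq, coe_div_four_eq_coe_div_four_iff, natCast_eq_fourQ]

lemma qFQF_eq_qFQF_iff (z z' : FQF m) :
    qFQF z = qFQF z' ↔
      fourQ (hyperbolic (ZMod 2) (Fin m)) z = fourQ (hyperbolic (ZMod 2) (Fin m)) z' := by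
  rw [qFQF_eq z', qFQF_eq_coe_iff, natCast_eq_fourQ]

lemma inOrbit_iff (x y : FQF m) : inOrbit x y ↔ OrbitRel (hyperbolic (ZMod 2) (Fin m)) x y := by
  simp only [inOrbit, OrbitRel, qFQF_eq_qFQF_iff]

lemma card_inOrbit {x : FQF m} (hx : parity x.2 = 1) :
    (Nat.card {y // inOrbit x y} : ℤ) =
      4 ^ m + signChar (hyperbolic (ZMod 2) (Fin m) x.1) * 2 ^ m := by
  have h := two_mul_card_hyperbolic_eq (Fin m) (hyperbolic (ZMod 2) (Fin m) x.1)
  simp only [inOrbit_iff, card_orbitRel hx, Fintype.card_fin] at h ⊢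
  push_cast
  linarith

lemma hyperbolic_efg (hm : 0 < m) :
    hyperbolic (ZMod 2) (Fin m) (eElt m + fElt m + gElt m).1 = 1 := by
  rw [hyperbolic_apply, Finset.sum_eq_single ⟨0, hm⟩]
  · simp [eElt, fElt, gElt]
  · intro i _ hi
    have : i.val ≠ 0 := fun h => hi (Fin.ext h)
    simp [eElt, fElt, gElt, this]
  · simp

end Concrete

/-- the `O(u(2)^m ⊕ ⟨1/4⟩)`-orbit of `g` has q-value `1/4` and
size `2^{2m}+2^m`, while the orbit of `e+f+g` has q-value `-3/4` (i.e. `5/4`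
in `ℚ/2ℤ`) and size `2^{2m}-2^m`. -/
theorem orbit_of_g_and_efg (m : ℕ) (hm : 0 < m) :
    (∀ y : FQF m, inOrbit (gElt m) y → qFQF y = ((1/4 : ℚ) : AddCircle (2 : ℚ))) ∧
    Nat.card {y : FQF m // inOrbit (gElt m) y} = 2 ^ (2 * m) + 2 ^ m ∧
    (∀ y : FQF m, inOrbit (eElt m + fElt m + gElt m) y →
      qFQF y = ((5/4 : ℚ) : AddCircle (2 : ℚ))) ∧
    Nat.card {y : FQF m // inOrbit (eElt m + fElt m + gElt m) y} = 2 ^ (2 * m) - 2 ^ m := by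
  have hg : parity (gElt m).2 = 1 := rfl
  have hgQ : hyperbolic (ZMod 2) (Fin m) (gElt m).1 = 0 := by simp [hyperbolic_apply, gElt]
  have hefg : parity (eElt m + fElt m + gElt m).2 = 1 := rfl
  have hle : 2 ^ m ≤ 4 ^ m := Nat.pow_le_pow_left (by norm_num) m
  rw [pow_mul, show 2 ^ 2 = 4 by rfl]
  refine ⟨fun y hy => ?_, ?_, fun y hy => ?_, ?_⟩
  · have h := (qFQF_eq_coe_iff y 1).2
      (by rw [((inOrbit_iff _ y).1 hy).fourQ_eq, fourQ, hgQ]; rfl)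
    simpa using h
  · have h := card_inOrbit hg
    rw [hgQ, AddChar.map_zero_eq_one, one_mul] at h
    exact_mod_cast h
  · have h := (qFQF_eq_coe_iff y 5).2
      (by rw [((inOrbit_iff _ y).1 hy).fourQ_eq, fourQ, hyperbolic_efg hm]; rfl)
    simpa using h
  · have h := card_inOrbit hefg
    rw [hyperbolic_efg hm, show signChar 1 = -1 from rfl] at h
    zify [hle]
    linarith
end

section
/- Let E_7 denote the (negative definite) root lattice of type E_7 and E_7(2) its rescaling by 2. Then A_{E_7(2)} ≅ (Z/2)^6 × Z/4 and q_{E_7(2)} ≅ u(2)^{⊕3} ⊕ ⟨1/4⟩. -/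
/-- Gram matrix of the negative definite `E_7` root lattice
(nodes 0–5 a chain, node 6 attached to node 2). -/
def gramE7 : Matrix (Fin 7) (Fin 7) ℤ := fun i j =>
  if i = j then -2
  else if (min i.val j.val, max i.val j.val) ∈
      [(0,1), (1,2), (2,3), (3,4), (4,5), (2,6)] then 1
  else 0

/-- Gram matrix of `E_7(2)`, the `E_7` lattice with form scaled by 2. -/
def gramE72 : Matrix (Fin 7) (Fin 7) ℤ := 2 • gramE7

/-- Underlying group of the finite quadratic form `u(2)^3 ⊕ ⟨1/4⟩`. -/
abbrev T3 : Type := (Fin 3 → ZMod 2 × ZMod 2) × ZMod 4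

/-- The quadratic form `u(2)^3 ⊕ ⟨1/4⟩` with values in `ℚ/2ℤ`. -/
def qT3 (x : T3) : AddCircle (2 : ℚ) :=
  (((∑ i, ((x.1 i).1.val : ℚ) * ((x.1 i).2.val : ℚ)) + ((x.2.val : ℚ))^2 / 4 : ℚ) :
    AddCircle (2 : ℚ))

/-- The discriminant quadratic form of `E_7(2)` evaluated on `x ∈ E_7(2)^*`,
where `E_7(2)^*` is identified with `ℤ^7` via the dual basis:
`q(x) = xᵀ G⁻¹ x ∈ ℚ/2ℤ` with `G` the Gram matrix of `E_7(2)`. -/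
noncomputable def qE72 (x : Fin 7 → ℤ) : AddCircle (2 : ℚ) :=
  ((dotProduct (Matrix.vecMul (fun i => (x i : ℚ)) (gramE72.map (Int.cast : ℤ → ℚ))⁻¹)
      (fun i => (x i : ℚ)) : ℚ) : AddCircle (2 : ℚ))

/-! ### Auxiliary matrices -/

def matU : Matrix (Fin 7) (Fin 7) ℤ :=
  !![3, 8, 11, 9, 1, 4, 8;
     1, -2, 1, 2, 10, 2, -2;
     -1, 0, -2, -2, -5, -1, 0;
     -2, -4, -7, -6, -4, -3, -4;
     -2, -11, -13, -10, 7, -4, -12;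
     -1, -3, -3, -2, 1, 0, -2;
     0, 4, 4, 3, -6, 1, 5]

def matX : Matrix (Fin 7) (Fin 7) ℤ :=
  !![2, -2, 0, -2, 3, 1, 2;
     0, 2, 1, 3, -2, -1, -2;
     -2, -3, 0, -6, 1, 1, 0;
     1, 2, 1, 1, 2, -2, 4;
     0, 1, -1, 3, -2, 0, -2;
     0, -1, 2, -3, 1, 1, 0;
     1, 1, -3, 6, -3, 1, -3]

def matV : Matrix (Fin 7) (Fin 7) ℤ :=
  !![-1, 1, 0, 1, -1, 0, 0;
     0, 0, 0, 0, 1, 1, 4;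
     1, 1, 1, 2, 1, 1, 4;
     0, -1, 0, 0, 0, 2, -1;
     0, -1, 0, -1, 1, 1, 2;
     0, 0, -1, 1, 0, 0, 1;
     0, 0, 2, -2, 2, 0, 5]

def matW : Matrix (Fin 7) (Fin 7) ℤ :=
  !![2, -2, 3, -6, 11, -7, -5;
     -4, 6, -4, 7, -16, 6, 5;
     2, -3, 2, -3, 7, -3, -2;
     0, -1, 0, 1, -1, 2, 1;
     -7, 7, -7, 14, -28, 15, 11;
     -1, 2, -1, 2, -4, 1, 1;
     2, -2, 2, -4, 8, -4, -3]

def matS : Matrix (Fin 7) (Fin 7) ℤ :=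
  !![4, 6, 12, 10, 9, 5, 6;
     6, 12, 20, 17, 14, 7, 10;
     12, 20, 37, 32, 28, 14, 18;
     10, 17, 32, 28, 25, 12, 15;
     9, 14, 28, 25, 24, 14, 15;
     5, 7, 14, 12, 14, 6, 6;
     6, 10, 18, 15, 15, 6, 8]

def matE : Matrix (Fin 7) (Fin 7) ℤ :=
  !![0, 1, 0, 1, 1, 0, 0;
     0, 0, 1, 1, 1, 0, 0;
     0, 0, 0, 0, 1, 0, 0;
     0, 0, 0, 0, 1, 1, 1;
     0, 0, 0, 0, 0, 0, 0;
     0, 0, 0, 0, 0, 0, 0;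
     0, 0, 0, 0, 0, 0, 0]

def matN : Matrix (Fin 7) (Fin 7) ℤ :=
  !![-4, -6, -8, -6, -4, -2, -4;
     -6, -12, -16, -12, -8, -4, -8;
     -8, -16, -24, -18, -12, -6, -12;
     -6, -12, -18, -15, -10, -5, -9;
     -4, -8, -12, -10, -8, -4, -6;
     -2, -4, -6, -5, -4, -3, -3;
     -4, -8, -12, -9, -6, -3, -7]

def matD : Matrix (Fin 7) (Fin 7) ℤ := Matrix.diagonal ![2,2,2,2,2,2,4]

lemma hUX : matU * matX = 1 := by decide
lemma hXU : matX * matU = 1 := by decide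
lemma hGV : gramE72 * matV = matX * matD := by decide
lemma hUG : matU * gramE72 = matD * matW := by decide
lemma hGN : gramE72 * matN = (4:ℤ) • 1 := by decide

/-! ### The homomorphism -/

def phiFun (x : Fin 7 → ℤ) : T3 :=
  (![(((matU.mulVec x 0 : ℤ) : ZMod 2), ((matU.mulVec x 1 : ℤ) : ZMod 2)),
     (((matU.mulVec x 2 : ℤ) : ZMod 2), ((matU.mulVec x 3 : ℤ) : ZMod 2)),
     (((matU.mulVec x 4 : ℤ) : ZMod 2), ((matU.mulVec x 5 : ℤ) : ZMod 2))],
   ((matU.mulVec x 6 : ℤ) : ZMod 4))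

def phi : (Fin 7 → ℤ) →+ T3 where
  toFun := phiFun
  map_zero' := by
    refine Prod.ext ?_ ?_ <;>
      simp only [phiFun, Matrix.mulVec_zero, Pi.zero_apply, Int.cast_zero]
    · funext i; fin_cases i <;> rfl
    · rfl
  map_add' x y := by
    refine Prod.ext ?_ ?_ <;>
      simp only [phiFun, Matrix.mulVec_add, Pi.add_apply, Int.cast_add]
    · funext i; fin_cases i <;> rfl
    · rfl

def liftT (t : T3) : Fin 7 → ℤ :=
  ![((t.1 0).1.val : ℤ), ((t.1 0).2.val : ℤ), ((t.1 1).1.val : ℤ), ((t.1 1).2.val : ℤ),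
    ((t.1 2).1.val : ℤ), ((t.1 2).2.val : ℤ), (t.2.val : ℤ)]

lemma phi_surj : Function.Surjective phi := by
  intro t
  refine ⟨matX.mulVec (liftT t), ?_⟩
  have h : matU.mulVec (matX.mulVec (liftT t)) = liftT t := by
    rw [Matrix.mulVec_mulVec, hUX, Matrix.one_mulVec]
  show phiFun _ = t
  unfold phiFun
  rw [h]
  refine Prod.ext ?_ ?_
  · funext i
    fin_cases i <;>
      refine Prod.ext ?_ ?_ <;>
      · show ((((_ : ZMod 2).val : ℤ)) : ZMod 2) = _
        push_cast
        exact ZMod.natCast_rightInverse _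
  · show ((((t.2 : ZMod 4).val : ℤ)) : ZMod 4) = _
    push_cast
    exact ZMod.natCast_rightInverse _

set_option maxHeartbeats 1000000 in
lemma phi_ker (x : Fin 7 → ℤ) : phi x = 0 ↔ ∃ y : Fin 7 → ℤ, gramE72.mulVec y = x := by
  constructor
  · intro h
    have h1 : (phiFun x).1 = 0 := congrArg Prod.fst h
    have h2 : (phiFun x).2 = 0 := congrArg Prod.snd h
    have e : ∀ i : Fin 3, (phiFun x).1 i = 0 := fun i => congrFun h1 i
    have d0 : (2:ℤ) ∣ matU.mulVec x 0 := by
      have := congrArg Prod.fst (e 0)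
      exact_mod_cast (ZMod.intCast_zmod_eq_zero_iff_dvd _ 2).mp this
    have d1 : (2:ℤ) ∣ matU.mulVec x 1 := by
      have := congrArg Prod.snd (e 0)
      exact_mod_cast (ZMod.intCast_zmod_eq_zero_iff_dvd _ 2).mp this
    have d2 : (2:ℤ) ∣ matU.mulVec x 2 := by
      have := congrArg Prod.fst (e 1)
      exact_mod_cast (ZMod.intCast_zmod_eq_zero_iff_dvd _ 2).mp this
    have d3 : (2:ℤ) ∣ matU.mulVec x 3 := by
      have := congrArg Prod.snd (e 1)
      exact_mod_cast (ZMod.intCast_zmod_eq_zero_iff_dvd _ 2).mp this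
    have d4 : (2:ℤ) ∣ matU.mulVec x 4 := by
      have := congrArg Prod.fst (e 2)
      exact_mod_cast (ZMod.intCast_zmod_eq_zero_iff_dvd _ 2).mp this
    have d5 : (2:ℤ) ∣ matU.mulVec x 5 := by
      have := congrArg Prod.snd (e 2)
      exact_mod_cast (ZMod.intCast_zmod_eq_zero_iff_dvd _ 2).mp this
    have d6 : (4:ℤ) ∣ matU.mulVec x 6 := by
      exact_mod_cast (ZMod.intCast_zmod_eq_zero_iff_dvd _ 4).mp h2
    set z : Fin 7 → ℤ := fun i => matU.mulVec x i / (![2,2,2,2,2,2,4] : Fin 7 → ℤ) i with hz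
    refine ⟨matV.mulVec z, ?_⟩
    have hD : matD.mulVec z = matU.mulVec x := by
      funext i
      simp only [matD, Matrix.mulVec_diagonal]
      fin_cases i
      · exact Int.mul_ediv_cancel' d0
      · exact Int.mul_ediv_cancel' d1
      · exact Int.mul_ediv_cancel' d2
      · exact Int.mul_ediv_cancel' d3
      · exact Int.mul_ediv_cancel' d4
      · exact Int.mul_ediv_cancel' d5
      · exact Int.mul_ediv_cancel' d6
    calc gramE72.mulVec (matV.mulVec z) = (gramE72 * matV).mulVec z := by
            rw [Matrix.mulVec_mulVec]
      _ = matX.mulVec (matD.mulVec z) := by rw [hGV, ← Matrix.mulVec_mulVec]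
      _ = matX.mulVec (matU.mulVec x) := by rw [hD]
      _ = x := by rw [Matrix.mulVec_mulVec, hXU, Matrix.one_mulVec]
  · rintro ⟨y, rfl⟩
    have key : matU.mulVec (gramE72.mulVec y) = matD.mulVec (matW.mulVec y) := by
      rw [Matrix.mulVec_mulVec, hUG, ← Matrix.mulVec_mulVec]
    have comp : ∀ i : Fin 7, matU.mulVec (gramE72.mulVec y) i
        = (![2,2,2,2,2,2,4] : Fin 7 → ℤ) i * matW.mulVec y i := by
      intro i
      rw [key]
      exact Matrix.mulVec_diagonal _ _ _
    have h2 : ∀ k : Fin 7, ((matU.mulVec (gramE72.mulVec y) k : ℤ) : ZMod 2) = 0 := by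
      intro k
      rw [comp k, Int.cast_mul]
      have hk : (((![2,2,2,2,2,2,4] : Fin 7 → ℤ) k : ℤ) : ZMod 2) = 0 := by
        fin_cases k <;> decide
      rw [hk, zero_mul]
    have h4 : ((matU.mulVec (gramE72.mulVec y) 6 : ℤ) : ZMod 4) = 0 := by
      rw [comp 6, Int.cast_mul]
      have hk : (((![2,2,2,2,2,2,4] : Fin 7 → ℤ) 6 : ℤ) : ZMod 4) = 0 := by decide
      rw [hk, zero_mul]
    refine Prod.ext ?_ ?_
    · funext i
      fin_cases i <;> exact Prod.ext (h2 _) (h2 _)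
    · exact h4

/-! ### The quadratic form identity -/

lemma aux_int (y0 y1 y2 y3 y4 y5 y6 t s : ℤ)
    (ht : 4*(y0*y1+y2*y3+y4*y5)+y6^2 = t + 8*s) :
    ∃ k : ℤ, 4*((y0%2)*(y1%2)+(y2%2)*(y3%2)+(y4%2)*(y5%2)) + (y6%4)^2 = t + 8*k := by
  refine ⟨s - (y0*(y1/2) + (y0/2)*y1 - 2*(y0/2)*(y1/2)
    + y2*(y3/2) + (y2/2)*y3 - 2*(y2/2)*(y3/2)
    + y4*(y5/2) + (y4/2)*y5 - 2*(y4/2)*(y5/2)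
    + y6*(y6/4) - 2*(y6/4)^2), ?_⟩
  have e0 : y0 % 2 = y0 - 2*(y0/2) := by rw [Int.emod_def]
  have e1 : y1 % 2 = y1 - 2*(y1/2) := by rw [Int.emod_def]
  have e2 : y2 % 2 = y2 - 2*(y2/2) := by rw [Int.emod_def]
  have e3 : y3 % 2 = y3 - 2*(y3/2) := by rw [Int.emod_def]
  have e4 : y4 % 2 = y4 - 2*(y4/2) := by rw [Int.emod_def]
  have e5 : y5 % 2 = y5 - 2*(y5/2) := by rw [Int.emod_def]
  have e6 : y6 % 4 = y6 - 4*(y6/4) := by rw [Int.emod_def]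
  rw [e0, e1, e2, e3, e4, e5, e6]
  linear_combination ht

set_option maxHeartbeats 2000000 in
lemma ht_all (x : Fin 7 → ℤ) :
    4*(matU.mulVec x 0 * matU.mulVec x 1 + matU.mulVec x 2 * matU.mulVec x 3
       + matU.mulVec x 4 * matU.mulVec x 5) + (matU.mulVec x 6)^2
    = dotProduct (Matrix.vecMul x matN) x
      + 8*(dotProduct (Matrix.vecMul x matS) x
           + dotProduct (Matrix.vecMul x matE) x) := by
  simp only [Matrix.mulVec, Matrix.vecMul, dotProduct, Fin.sum_univ_seven,
    show matU 0 0 = (3 : ℤ) from rfl,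
    show matU 0 1 = (8 : ℤ) from rfl,
    show matU 0 2 = (11 : ℤ) from rfl,
    show matU 0 3 = (9 : ℤ) from rfl,
    show matU 0 4 = (1 : ℤ) from rfl,
    show matU 0 5 = (4 : ℤ) from rfl,
    show matU 0 6 = (8 : ℤ) from rfl,
    show matU 1 0 = (1 : ℤ) from rfl,
    show matU 1 1 = ((-2) : ℤ) from rfl,
    show matU 1 2 = (1 : ℤ) from rfl,
    show matU 1 3 = (2 : ℤ) from rfl,
    show matU 1 4 = (10 : ℤ) from rfl,
    show matU 1 5 = (2 : ℤ) from rfl,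
    show matU 1 6 = ((-2) : ℤ) from rfl,
    show matU 2 0 = ((-1) : ℤ) from rfl,
    show matU 2 1 = (0 : ℤ) from rfl,
    show matU 2 2 = ((-2) : ℤ) from rfl,
    show matU 2 3 = ((-2) : ℤ) from rfl,
    show matU 2 4 = ((-5) : ℤ) from rfl,
    show matU 2 5 = ((-1) : ℤ) from rfl,
    show matU 2 6 = (0 : ℤ) from rfl,
    show matU 3 0 = ((-2) : ℤ) from rfl,
    show matU 3 1 = ((-4) : ℤ) from rfl,
    show matU 3 2 = ((-7) : ℤ) from rfl,
    show matU 3 3 = ((-6) : ℤ) from rfl,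
    show matU 3 4 = ((-4) : ℤ) from rfl,
    show matU 3 5 = ((-3) : ℤ) from rfl,
    show matU 3 6 = ((-4) : ℤ) from rfl,
    show matU 4 0 = ((-2) : ℤ) from rfl,
    show matU 4 1 = ((-11) : ℤ) from rfl,
    show matU 4 2 = ((-13) : ℤ) from rfl,
    show matU 4 3 = ((-10) : ℤ) from rfl,
    show matU 4 4 = (7 : ℤ) from rfl,
    show matU 4 5 = ((-4) : ℤ) from rfl,
    show matU 4 6 = ((-12) : ℤ) from rfl,
    show matU 5 0 = ((-1) : ℤ) from rfl,
    show matU 5 1 = ((-3) : ℤ) from rfl,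
    show matU 5 2 = ((-3) : ℤ) from rfl,
    show matU 5 3 = ((-2) : ℤ) from rfl,
    show matU 5 4 = (1 : ℤ) from rfl,
    show matU 5 5 = (0 : ℤ) from rfl,
    show matU 5 6 = ((-2) : ℤ) from rfl,
    show matU 6 0 = (0 : ℤ) from rfl,
    show matU 6 1 = (4 : ℤ) from rfl,
    show matU 6 2 = (4 : ℤ) from rfl,
    show matU 6 3 = (3 : ℤ) from rfl,
    show matU 6 4 = ((-6) : ℤ) from rfl,
    show matU 6 5 = (1 : ℤ) from rfl,
    show matU 6 6 = (5 : ℤ) from rfl,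
    show matN 0 0 = ((-4) : ℤ) from rfl,
    show matN 0 1 = ((-6) : ℤ) from rfl,
    show matN 0 2 = ((-8) : ℤ) from rfl,
    show matN 0 3 = ((-6) : ℤ) from rfl,
    show matN 0 4 = ((-4) : ℤ) from rfl,
    show matN 0 5 = ((-2) : ℤ) from rfl,
    show matN 0 6 = ((-4) : ℤ) from rfl,
    show matN 1 0 = ((-6) : ℤ) from rfl,
    show matN 1 1 = ((-12) : ℤ) from rfl,
    show matN 1 2 = ((-16) : ℤ) from rfl,
    show matN 1 3 = ((-12) : ℤ) from rfl,
    show matN 1 4 = ((-8) : ℤ) from rfl,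
    show matN 1 5 = ((-4) : ℤ) from rfl,
    show matN 1 6 = ((-8) : ℤ) from rfl,
    show matN 2 0 = ((-8) : ℤ) from rfl,
    show matN 2 1 = ((-16) : ℤ) from rfl,
    show matN 2 2 = ((-24) : ℤ) from rfl,
    show matN 2 3 = ((-18) : ℤ) from rfl,
    show matN 2 4 = ((-12) : ℤ) from rfl,
    show matN 2 5 = ((-6) : ℤ) from rfl,
    show matN 2 6 = ((-12) : ℤ) from rfl,
    show matN 3 0 = ((-6) : ℤ) from rfl,
    show matN 3 1 = ((-12) : ℤ) from rfl,
    show matN 3 2 = ((-18) : ℤ) from rfl,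
    show matN 3 3 = ((-15) : ℤ) from rfl,
    show matN 3 4 = ((-10) : ℤ) from rfl,
    show matN 3 5 = ((-5) : ℤ) from rfl,
    show matN 3 6 = ((-9) : ℤ) from rfl,
    show matN 4 0 = ((-4) : ℤ) from rfl,
    show matN 4 1 = ((-8) : ℤ) from rfl,
    show matN 4 2 = ((-12) : ℤ) from rfl,
    show matN 4 3 = ((-10) : ℤ) from rfl,
    show matN 4 4 = ((-8) : ℤ) from rfl,
    show matN 4 5 = ((-4) : ℤ) from rfl,
    show matN 4 6 = ((-6) : ℤ) from rfl,
    show matN 5 0 = ((-2) : ℤ) from rfl,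
    show matN 5 1 = ((-4) : ℤ) from rfl,
    show matN 5 2 = ((-6) : ℤ) from rfl,
    show matN 5 3 = ((-5) : ℤ) from rfl,
    show matN 5 4 = ((-4) : ℤ) from rfl,
    show matN 5 5 = ((-3) : ℤ) from rfl,
    show matN 5 6 = ((-3) : ℤ) from rfl,
    show matN 6 0 = ((-4) : ℤ) from rfl,
    show matN 6 1 = ((-8) : ℤ) from rfl,
    show matN 6 2 = ((-12) : ℤ) from rfl,
    show matN 6 3 = ((-9) : ℤ) from rfl,
    show matN 6 4 = ((-6) : ℤ) from rfl,
    show matN 6 5 = ((-3) : ℤ) from rfl,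
    show matN 6 6 = ((-7) : ℤ) from rfl,
    show matS 0 0 = (4 : ℤ) from rfl,
    show matS 0 1 = (6 : ℤ) from rfl,
    show matS 0 2 = (12 : ℤ) from rfl,
    show matS 0 3 = (10 : ℤ) from rfl,
    show matS 0 4 = (9 : ℤ) from rfl,
    show matS 0 5 = (5 : ℤ) from rfl,
    show matS 0 6 = (6 : ℤ) from rfl,
    show matS 1 0 = (6 : ℤ) from rfl,
    show matS 1 1 = (12 : ℤ) from rfl,
    show matS 1 2 = (20 : ℤ) from rfl,
    show matS 1 3 = (17 : ℤ) from rfl,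
    show matS 1 4 = (14 : ℤ) from rfl,
    show matS 1 5 = (7 : ℤ) from rfl,
    show matS 1 6 = (10 : ℤ) from rfl,
    show matS 2 0 = (12 : ℤ) from rfl,
    show matS 2 1 = (20 : ℤ) from rfl,
    show matS 2 2 = (37 : ℤ) from rfl,
    show matS 2 3 = (32 : ℤ) from rfl,
    show matS 2 4 = (28 : ℤ) from rfl,
    show matS 2 5 = (14 : ℤ) from rfl,
    show matS 2 6 = (18 : ℤ) from rfl,
    show matS 3 0 = (10 : ℤ) from rfl,
    show matS 3 1 = (17 : ℤ) from rfl,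
    show matS 3 2 = (32 : ℤ) from rfl,
    show matS 3 3 = (28 : ℤ) from rfl,
    show matS 3 4 = (25 : ℤ) from rfl,
    show matS 3 5 = (12 : ℤ) from rfl,
    show matS 3 6 = (15 : ℤ) from rfl,
    show matS 4 0 = (9 : ℤ) from rfl,
    show matS 4 1 = (14 : ℤ) from rfl,
    show matS 4 2 = (28 : ℤ) from rfl,
    show matS 4 3 = (25 : ℤ) from rfl,
    show matS 4 4 = (24 : ℤ) from rfl,
    show matS 4 5 = (14 : ℤ) from rfl,
    show matS 4 6 = (15 : ℤ) from rfl,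
    show matS 5 0 = (5 : ℤ) from rfl,
    show matS 5 1 = (7 : ℤ) from rfl,
    show matS 5 2 = (14 : ℤ) from rfl,
    show matS 5 3 = (12 : ℤ) from rfl,
    show matS 5 4 = (14 : ℤ) from rfl,
    show matS 5 5 = (6 : ℤ) from rfl,
    show matS 5 6 = (6 : ℤ) from rfl,
    show matS 6 0 = (6 : ℤ) from rfl,
    show matS 6 1 = (10 : ℤ) from rfl,
    show matS 6 2 = (18 : ℤ) from rfl,
    show matS 6 3 = (15 : ℤ) from rfl,
    show matS 6 4 = (15 : ℤ) from rfl,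
    show matS 6 5 = (6 : ℤ) from rfl,
    show matS 6 6 = (8 : ℤ) from rfl,
    show matE 0 0 = (0 : ℤ) from rfl,
    show matE 0 1 = (1 : ℤ) from rfl,
    show matE 0 2 = (0 : ℤ) from rfl,
    show matE 0 3 = (1 : ℤ) from rfl,
    show matE 0 4 = (1 : ℤ) from rfl,
    show matE 0 5 = (0 : ℤ) from rfl,
    show matE 0 6 = (0 : ℤ) from rfl,
    show matE 1 0 = (0 : ℤ) from rfl,
    show matE 1 1 = (0 : ℤ) from rfl,
    show matE 1 2 = (1 : ℤ) from rfl,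
    show matE 1 3 = (1 : ℤ) from rfl,
    show matE 1 4 = (1 : ℤ) from rfl,
    show matE 1 5 = (0 : ℤ) from rfl,
    show matE 1 6 = (0 : ℤ) from rfl,
    show matE 2 0 = (0 : ℤ) from rfl,
    show matE 2 1 = (0 : ℤ) from rfl,
    show matE 2 2 = (0 : ℤ) from rfl,
    show matE 2 3 = (0 : ℤ) from rfl,
    show matE 2 4 = (1 : ℤ) from rfl,
    show matE 2 5 = (0 : ℤ) from rfl,
    show matE 2 6 = (0 : ℤ) from rfl,
    show matE 3 0 = (0 : ℤ) from rfl,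
    show matE 3 1 = (0 : ℤ) from rfl,
    show matE 3 2 = (0 : ℤ) from rfl,
    show matE 3 3 = (0 : ℤ) from rfl,
    show matE 3 4 = (1 : ℤ) from rfl,
    show matE 3 5 = (1 : ℤ) from rfl,
    show matE 3 6 = (1 : ℤ) from rfl,
    show matE 4 0 = (0 : ℤ) from rfl,
    show matE 4 1 = (0 : ℤ) from rfl,
    show matE 4 2 = (0 : ℤ) from rfl,
    show matE 4 3 = (0 : ℤ) from rfl,
    show matE 4 4 = (0 : ℤ) from rfl,
    show matE 4 5 = (0 : ℤ) from rfl,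
    show matE 4 6 = (0 : ℤ) from rfl,
    show matE 5 0 = (0 : ℤ) from rfl,
    show matE 5 1 = (0 : ℤ) from rfl,
    show matE 5 2 = (0 : ℤ) from rfl,
    show matE 5 3 = (0 : ℤ) from rfl,
    show matE 5 4 = (0 : ℤ) from rfl,
    show matE 5 5 = (0 : ℤ) from rfl,
    show matE 5 6 = (0 : ℤ) from rfl,
    show matE 6 0 = (0 : ℤ) from rfl,
    show matE 6 1 = (0 : ℤ) from rfl,
    show matE 6 2 = (0 : ℤ) from rfl,
    show matE 6 3 = (0 : ℤ) from rfl,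
    show matE 6 4 = (0 : ℤ) from rfl,
    show matE 6 5 = (0 : ℤ) from rfl,
    show matE 6 6 = (0 : ℤ) from rfl]
  ring

lemma hInv : (gramE72.map (Int.cast : ℤ → ℚ))⁻¹ = (4:ℚ)⁻¹ • matN.map (Int.cast : ℤ → ℚ) := by
  apply Matrix.inv_eq_right_inv
  have h1 : gramE72.map (Int.cast : ℤ → ℚ) * matN.map (Int.cast : ℤ → ℚ) = (4:ℚ) • 1 := by
    have h2 : gramE72.map (Int.cast : ℤ → ℚ) * matN.map (Int.cast : ℤ → ℚ)
        = (gramE72 * matN).map (Int.cast : ℤ → ℚ) := by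
      rw [show (Int.cast : ℤ → ℚ) = ⇑(Int.castRingHom ℚ) from rfl, ← Matrix.map_mul]
    rw [h2, hGN]
    ext i j
    by_cases h : i = j <;>
      simp only [Matrix.map_apply, Matrix.smul_apply, Matrix.one_apply, smul_eq_mul, h,
        if_true, if_false, ite_true, ite_false] <;>
      norm_num
  rw [mul_smul_comm, h1, smul_smul]
  norm_num

set_option maxHeartbeats 1000000 in
lemma qE72_expand (x : Fin 7 → ℤ) :
    dotProduct (Matrix.vecMul (fun i => (x i : ℚ)) (gramE72.map (Int.cast : ℤ → ℚ))⁻¹)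
      (fun i => (x i : ℚ))
    = ((dotProduct (Matrix.vecMul x matN) x : ℤ) : ℚ) / 4 := by
  rw [hInv]
  simp only [Matrix.vecMul, dotProduct, Fin.sum_univ_seven, Matrix.smul_apply,
    Matrix.map_apply, smul_eq_mul,
    show matN 0 0 = ((-4) : ℤ) from rfl,show matN 0 1 = ((-6) : ℤ) from rfl,show matN 0 2 = ((-8) : ℤ) from rfl,show matN 0 3 = ((-6) : ℤ) from rfl,show matN 0 4 = ((-4) : ℤ) from rfl,show matN 0 5 = ((-2) : ℤ) from rfl,show matN 0 6 = ((-4) : ℤ) from rfl,show matN 1 0 = ((-6) : ℤ) from rfl,show matN 1 1 = ((-12) : ℤ) from rfl,show matN 1 2 = ((-16) : ℤ) from rfl,show matN 1 3 = ((-12) : ℤ) from rfl,show matN 1 4 = ((-8) : ℤ) from rfl,show matN 1 5 = ((-4) : ℤ) from rfl,show matN 1 6 = ((-8) : ℤ) from rfl,show matN 2 0 = ((-8) : ℤ) from rfl,show matN 2 1 = ((-16) : ℤ) from rfl,show matN 2 2 = ((-24) : ℤ) from rfl,show matN 2 3 = ((-18) : ℤ) from rfl,show matN 2 4 = ((-12)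 : ℤ) from rfl,show matN 2 5 = ((-6) : ℤ) from rfl,show matN 2 6 = ((-12) : ℤ) from rfl,show matN 3 0 = ((-6) : ℤ) from rfl,show matN 3 1 = ((-12) : ℤ) from rfl,show matN 3 2 = ((-18) : ℤ) from rfl,show matN 3 3 = ((-15) : ℤ) from rfl,show matN 3 4 = ((-10) : ℤ) from rfl,show matN 3 5 = ((-5) : ℤ) from rfl,show matN 3 6 = ((-9) : ℤ) from rfl,show matN 4 0 = ((-4) : ℤ) from rfl,show matN 4 1 = ((-8) : ℤ) from rfl,show matN 4 2 = ((-12) : ℤ) from rfl,show matN 4 3 = ((-10) : ℤ) from rfl,show matN 4 4 = ((-8) : ℤ) from rfl,show matN 4 5 = ((-4) : ℤ) from rfl,show matN 4 6 = ((-6) : ℤ) from rfl,show matN 5 0 = ((-2) : ℤ) from rfl,show matN 5 1 = ((-4) : ℤ) from rfl,show matN 5 2 = ((-6) : ℤ) from rfl,show matN 5 3 = ((-5) : ℤ) from rfl,show matN 5 4 = ((-4) : ℤ) from rfl,show matN 5 5 = ((-3) : ℤ) from rfl,show matN 5 6 = ((-3) : ℤ) from rfl,show matN 6 0 = ((-4)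 : ℤ) from rfl,show matN 6 1 = ((-8) : ℤ) from rfl,show matN 6 2 = ((-12) : ℤ) from rfl,show matN 6 3 = ((-9) : ℤ) from rfl,show matN 6 4 = ((-6) : ℤ) from rfl,show matN 6 5 = ((-3) : ℤ) from rfl,show matN 6 6 = ((-7) : ℤ) from rfl]
  push_cast
  ring

lemma form_eq (x : Fin 7 → ℤ) : qT3 (phi x) = qE72 x := by
  obtain ⟨k, hk⟩ := aux_int (matU.mulVec x 0) (matU.mulVec x 1) (matU.mulVec x 2)
    (matU.mulVec x 3) (matU.mulVec x 4) (matU.mulVec x 5) (matU.mulVec x 6)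
    (dotProduct (Matrix.vecMul x matN) x)
    (dotProduct (Matrix.vecMul x matS) x + dotProduct (Matrix.vecMul x matE) x)
    (ht_all x)
  have a0 : ((((phi x).1 0).1.val : ℤ) : ℚ) = ((matU.mulVec x 0 % 2 : ℤ) : ℚ) := by
    exact_mod_cast congrArg (fun z : ℤ => (z : ℚ)) (ZMod.val_intCast (n := 2) (matU.mulVec x 0))
  have a1 : ((((phi x).1 0).2.val : ℤ) : ℚ) = ((matU.mulVec x 1 % 2 : ℤ) : ℚ) := by
    exact_mod_cast congrArg (fun z : ℤ => (z : ℚ)) (ZMod.val_intCast (n := 2) (matU.mulVec x 1))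
  have a2 : ((((phi x).1 1).1.val : ℤ) : ℚ) = ((matU.mulVec x 2 % 2 : ℤ) : ℚ) := by
    exact_mod_cast congrArg (fun z : ℤ => (z : ℚ)) (ZMod.val_intCast (n := 2) (matU.mulVec x 2))
  have a3 : ((((phi x).1 1).2.val : ℤ) : ℚ) = ((matU.mulVec x 3 % 2 : ℤ) : ℚ) := by
    exact_mod_cast congrArg (fun z : ℤ => (z : ℚ)) (ZMod.val_intCast (n := 2) (matU.mulVec x 3))
  have a4 : ((((phi x).1 2).1.val : ℤ) : ℚ) = ((matU.mulVec x 4 % 2 : ℤ) : ℚ) := by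
    exact_mod_cast congrArg (fun z : ℤ => (z : ℚ)) (ZMod.val_intCast (n := 2) (matU.mulVec x 4))
  have a5 : ((((phi x).1 2).2.val : ℤ) : ℚ) = ((matU.mulVec x 5 % 2 : ℤ) : ℚ) := by
    exact_mod_cast congrArg (fun z : ℤ => (z : ℚ)) (ZMod.val_intCast (n := 2) (matU.mulVec x 5))
  have a6 : (((phi x).2.val : ℤ) : ℚ) = ((matU.mulVec x 6 % 4 : ℤ) : ℚ) := by
    exact_mod_cast congrArg (fun z : ℤ => (z : ℚ)) (ZMod.val_intCast (n := 4) (matU.mulVec x 6))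
  unfold qT3 qE72
  rw [Fin.sum_univ_three]
  rw [show (((phi x).1 0).1.val : ℚ) = ((((phi x).1 0).1.val : ℤ) : ℚ) by push_cast; ring,
      show (((phi x).1 0).2.val : ℚ) = ((((phi x).1 0).2.val : ℤ) : ℚ) by push_cast; ring,
      show (((phi x).1 1).1.val : ℚ) = ((((phi x).1 1).1.val : ℤ) : ℚ) by push_cast; ring,
      show (((phi x).1 1).2.val : ℚ) = ((((phi x).1 1).2.val : ℤ) : ℚ) by push_cast; ring,
      show (((phi x).1 2).1.val : ℚ) = ((((phi x).1 2).1.val : ℤ) : ℚ) by push_cast; ring,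
      show (((phi x).1 2).2.val : ℚ) = ((((phi x).1 2).2.val : ℤ) : ℚ) by push_cast; ring,
      show ((phi x).2.val : ℚ) = (((phi x).2.val : ℤ) : ℚ) by push_cast; ring]
  rw [a0, a1, a2, a3, a4, a5, a6, qE72_expand]
  refine QuotientAddGroup.eq.mpr ⟨-k, ?_⟩
  have hkq : (4:ℚ) * (((matU.mulVec x 0 % 2 : ℤ):ℚ) * ((matU.mulVec x 1 % 2 : ℤ):ℚ)
      + ((matU.mulVec x 2 % 2 : ℤ):ℚ) * ((matU.mulVec x 3 % 2 : ℤ):ℚ)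
      + ((matU.mulVec x 4 % 2 : ℤ):ℚ) * ((matU.mulVec x 5 % 2 : ℤ):ℚ))
      + ((matU.mulVec x 6 % 4 : ℤ):ℚ)^2
      = ((dotProduct (Matrix.vecMul x matN) x : ℤ) : ℚ) + 8 * (k : ℚ) := by
    exact_mod_cast hk
  simp only [zsmul_eq_mul]
  push_cast at hkq ⊢
  linarith [hkq]

def equivT : T3 ≃+ ((Fin 6 → ZMod 2) × ZMod 4) where
  toFun t := (![(t.1 0).1, (t.1 0).2, (t.1 1).1, (t.1 1).2, (t.1 2).1, (t.1 2).2], t.2)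
  invFun s := (![(s.1 0, s.1 1), (s.1 2, s.1 3), (s.1 4, s.1 5)], s.2)
  left_inv t := by
    refine Prod.ext ?_ rfl
    funext i
    fin_cases i <;> rfl
  right_inv s := by
    refine Prod.ext ?_ rfl
    funext i
    fin_cases i <;> rfl
  map_add' a b := by
    refine Prod.ext ?_ rfl
    funext i
    fin_cases i <;> rfl

/-- the discriminant group of `E_7(2)` is `(ℤ/2)^6 × ℤ/4` and its
discriminant quadratic form is isomorphic to `u(2)^3 ⊕ ⟨1/4⟩`: there is a
surjective homomorphism `ℤ^7 ≅ E_7(2)^* → (ℤ/2)^6 × ℤ/4` with kernel exactly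
`E_7(2)` (the image of the Gram matrix) which transports `q_{E_7(2)}` to
`u(2)^3 ⊕ ⟨1/4⟩`. -/
theorem discriminant_form_E72 :
    ∃ φ : (Fin 7 → ℤ) →+ T3,
      Function.Surjective φ ∧
      (∀ x : Fin 7 → ℤ, φ x = 0 ↔ ∃ y : Fin 7 → ℤ, gramE72.mulVec y = x) ∧
      (∀ x : Fin 7 → ℤ, qT3 (φ x) = qE72 x) ∧
      Nonempty (T3 ≃+ ((Fin 6 → ZMod 2) × ZMod 4)) :=
  ⟨phi, phi_surj, phi_ker, form_eq, ⟨equivT⟩⟩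
end

section
/- Let D_7 be the root lattice of type D_7, viewed inside Z^7 (vectors with even coordinate sum). If K ⊂ D_7 is a sublattice of index 4, then K contains a vector of norm 2 (a root). Equivalently, no index-4 sublattice of D_7 is root-free. -/
/-- The root lattice `D_7`: vectors in `ℤ^7` with even coordinate sum. -/
def D7 : AddSubgroup (Fin 7 → ℤ) where
  carrier := {x | Even (∑ i, x i)}
  zero_mem' := by simp
  add_mem' := by
    intro a b ha hb
    simpa [Finset.sum_add_distrib] using ha.add hb
  neg_mem' := by
    intro a ha
    simpa using ha.neg

/-!
The seven vectors `e₀ - eᵢ` lie in `D₇` and any two of them differ by a root `eⱼ - eᵢ`.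
A sublattice of index `4` has only four cosets in `D₇`, so two of these vectors lie in the same
coset and their difference, a root, lies in the sublattice.
-/

theorem AddSubgroup.exists_ne_sub_mem_of_relIndex_lt {G ι : Type*} [AddCommGroup G] [Fintype ι]
    {H K : AddSubgroup G} (h₀ : H.relIndex K ≠ 0) (hlt : H.relIndex K < Fintype.card ι)
    (f : ι → G) (hf : ∀ i, f i ∈ K) : ∃ i j, i ≠ j ∧ f i - f j ∈ H := by
  have : Finite (K ⧸ H.addSubgroupOf K) := Nat.finite_of_card_ne_zero h₀
  have : Fintype (K ⧸ H.addSubgroupOf K) := Fintype.ofFinite _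
  obtain ⟨i, j, hij, hcoset⟩ := Fintype.exists_ne_map_eq_of_card_lt
    (fun i ↦ (⟨f i, hf i⟩ : K) : ι → K ⧸ H.addSubgroupOf K)
    (by rw [← Nat.card_eq_fintype_card]; exact hlt)
  refine ⟨j, i, hij.symm, ?_⟩
  have hmem := QuotientAddGroup.eq.mp hcoset
  rwa [AddSubgroup.mem_addSubgroupOf, AddSubgroup.coe_add, AddSubgroup.coe_neg,
    neg_add_eq_sub] at hmem

theorem sum_sq_single_one_sub_single_one {ι : Type*} [Fintype ι] [DecidableEq ι] {i j : ι}
    (hij : i ≠ j) : ∑ k, (Pi.single i 1 - Pi.single j 1 : ι → ℤ) k ^ 2 = 2 := by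
  have hsq : ∀ k, (Pi.single i 1 - Pi.single j 1 : ι → ℤ) k ^ 2
      = (Pi.single i 1 : ι → ℤ) k + (Pi.single j 1 : ι → ℤ) k := by
    intro k
    rcases eq_or_ne k i with rfl | hki <;> rcases eq_or_ne k j with rfl | hkj <;>
      simp_all
  simp only [hsq, Finset.sum_add_distrib, Finset.sum_pi_single']
  simp

theorem single_one_sub_single_one_mem_D7 (i j : Fin 7) :
    (Pi.single i 1 - Pi.single j 1 : Fin 7 → ℤ) ∈ D7 := by
  change Even (∑ k, (Pi.single i 1 - Pi.single j 1 : Fin 7 → ℤ) k)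
  simp [Finset.sum_sub_distrib]

theorem index_four_sublattice_of_D7_has_root_general (K : AddSubgroup (Fin 7 → ℤ))
    (hidx : K.relIndex D7 = 4) :
    ∃ x ∈ K, ∑ i, (x i) ^ 2 = 2 := by
  obtain ⟨i, j, hij, hmem⟩ := AddSubgroup.exists_ne_sub_mem_of_relIndex_lt (H := K)
    (by omega) (by simp [hidx]) (fun i : Fin 7 ↦ Pi.single 0 1 - Pi.single i 1)
    (fun i ↦ single_one_sub_single_one_mem_D7 0 i)
  rw [sub_sub_sub_cancel_left] at hmem
  exact ⟨_, hmem, sum_sq_single_one_sub_single_one hij.symm⟩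

/-- every sublattice of `D_7` of index 4 contains a root
(a vector of norm 2). -/
theorem index_four_sublattice_of_D7_has_root (K : AddSubgroup (Fin 7 → ℤ))
    (hKD : K ≤ D7) (hidx : K.relIndex D7 = 4) :
    ∃ x ∈ K, ∑ i, (x i) ^ 2 = 2 :=
  index_four_sublattice_of_D7_has_root_general K hidx
end
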